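/- arXiv:2306.05821 — 10 statements merged into one kernel-verified Lean document; each statement's English description precedes it below -/
import Mathlib

section
/- Let V be a vector space over a field F of characteristic not 2, and let u₁, u₂ be automorphisms of V with (u₁ - id)² = 0 and (u₂ - id)² = 0. Set u = u₁ ∘ u₂. Then both u₁ and u₂ commute with u + u⁻¹. -/
/-- In any ring, if `a * a = 0`, then `1 + a` commutes with `2 + (a*b + b*a)`. -/
theorem aux_comm {R : Type*} [Ring R] (a b : R) (ha : a * a = 0) :
    (1 + a) * (2 + (a * b + b * a)) = (2 + (a * b + b * a)) * (1 + a) := by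
  have h2eq : (2:R) = 1 + 1 := by norm_num
  rw [h2eq]
  have e1 : (1 + a) * ((1 + 1) + (a * b + b * a))
      = (1 + 1) + (a + a) + a * b + b * a + a * b * a + a * a * b := by noncomm_ring
  have e2 : ((1 + 1) + (a * b + b * a)) * (1 + a)
      = (1 + 1) + (a + a) + a * b + b * a + a * b * a + b * (a * a) := by noncomm_ring
  rw [e1, e2, ha, zero_mul, mul_zero]

/-- If `u₁, u₂` are automorphisms of `V` that are unipotent of index 2 and `u = u₁ ∘ u₂`,
then both `u₁` and `u₂` commute with `u + u⁻¹`. -/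
theorem stmt1 {F V : Type*} [Field F] (h2 : (2 : F) ≠ 0)
    [AddCommGroup V] [Module F V] [FiniteDimensional F V]
    (u₁ u₂ u : (Module.End F V)ˣ)
    (h₁ : ((u₁ : Module.End F V) - 1) ^ 2 = 0)
    (h₂ : ((u₂ : Module.End F V) - 1) ^ 2 = 0)
    (hu : u = u₁ * u₂) :
    (u₁ : Module.End F V) * ((u : Module.End F V) + (↑u⁻¹ : Module.End F V))
      = ((u : Module.End F V) + (↑u⁻¹ : Module.End F V)) * (u₁ : Module.End F V)
    ∧ (u₂ : Module.End F V) * ((u : Module.End F V) + (↑u⁻¹ : Module.End F V))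
      = ((u : Module.End F V) + (↑u⁻¹ : Module.End F V)) * (u₂ : Module.End F V) := by
  set a : Module.End F V := (u₁ : Module.End F V) - 1 with hadef
  set b : Module.End F V := (u₂ : Module.End F V) - 1 with hbdef
  have ha : a * a = 0 := by rw [← sq]; exact h₁
  have hb : b * b = 0 := by rw [← sq]; exact h₂
  have hu1 : (u₁ : Module.End F V) = 1 + a := by rw [hadef]; noncomm_ring
  have hu2 : (u₂ : Module.End F V) = 1 + b := by rw [hbdef]; noncomm_ring
  have hm1 : (u₁ : Module.End F V) * (1 - a) = 1 := by
    rw [hu1]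
    have : (1 + a) * (1 - a) = 1 - a * a := by noncomm_ring
    rw [this, ha, sub_zero]
  have hm2 : (u₂ : Module.End F V) * (1 - b) = 1 := by
    rw [hu2]
    have : (1 + b) * (1 - b) = 1 - b * b := by noncomm_ring
    rw [this, hb, sub_zero]
  have hinv1 : ((↑u₁⁻¹ : Module.End F V)) = 1 - a := by
    calc (↑u₁⁻¹ : Module.End F V) = ↑u₁⁻¹ * ((u₁ : Module.End F V) * (1 - a)) := by
          rw [hm1, mul_one]
      _ = (↑u₁⁻¹ * (u₁ : Module.End F V)) * (1 - a) := by rw [mul_assoc]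
      _ = 1 - a := by rw [← Units.val_mul, inv_mul_cancel, Units.val_one, one_mul]
  have hinv2 : ((↑u₂⁻¹ : Module.End F V)) = 1 - b := by
    calc (↑u₂⁻¹ : Module.End F V) = ↑u₂⁻¹ * ((u₂ : Module.End F V) * (1 - b)) := by
          rw [hm2, mul_one]
      _ = (↑u₂⁻¹ * (u₂ : Module.End F V)) * (1 - b) := by rw [mul_assoc]
      _ = 1 - b := by rw [← Units.val_mul, inv_mul_cancel, Units.val_one, one_mul]
  have hS : (u : Module.End F V) + (↑u⁻¹ : Module.End F V) = 2 + (a * b + b * a) := by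
    have h1 : (u : Module.End F V) = (1 + a) * (1 + b) := by
      rw [hu, Units.val_mul, hu1, hu2]
    have h2' : (↑u⁻¹ : Module.End F V) = (1 - b) * (1 - a) := by
      rw [hu, mul_inv_rev, Units.val_mul, hinv1, hinv2]
    rw [h1, h2']
    have h2eq : (2 : Module.End F V) = 1 + 1 := by norm_num
    rw [h2eq]
    noncomm_ring
  rw [hS, hu1, hu2]
  constructor
  · exact aux_comm a b ha
  · rw [add_comm (a * b) (b * a)]
    exact aux_comm b a hb
end

section
/- Let V be a vector space over a field F of characteristic not 2, and let u₁, u₂ be automorphisms of V with (u₁ - id)² = 0 and (u₂ - id)² = 0. Set u = u₁ ∘ u₂. Then for every natural number k, both u₁ and u₂ map the subspace ker (u - id)^k into itself and map the subspace range (u - id)^k into itself. -/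
private lemma stmt2_aux {R : Type*} [Ring R] (x y e m : R)
    (hme : ∀ j : ℕ, m ^ j * e = e * m ^ j)
    (I1 : x * m = m * y)
    (I2 : m * x = e * (2 - x) * m)
    (I3 : y * m = m * ((2 - y) * e)) :
    ∀ j : ℕ, (∃ a, m ^ j * x = a * m ^ j) ∧ (∃ b, m ^ j * y = b * m ^ j)
      ∧ (∃ c, x * m ^ j = m ^ j * c) ∧ (∃ d, y * m ^ j = m ^ j * d) := by
  intro j
  induction j with
  | zero => exact ⟨⟨x, by simp⟩, ⟨y, by simp⟩, ⟨x, by simp⟩, ⟨y, by simp⟩⟩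
  | succ j ih =>
    obtain ⟨⟨a, ha⟩, ⟨b, hb⟩, ⟨c, hc⟩, ⟨d, hd⟩⟩ := ih
    have hpj := hme j
    rw [pow_succ]
    refine ⟨⟨2 * e - e * a, ?_⟩, ⟨a, ?_⟩, ⟨d, ?_⟩, ⟨(2 - d) * e, ?_⟩⟩
    · have h1 : m ^ j * m * x = m ^ j * (e * (2 - x) * m) := by rw [mul_assoc, I2]
      have h2 : m ^ j * (e * (2 - x) * m) = (m ^ j * e) * ((2 - x) * m) := by noncomm_ring
      rw [h1, h2, hpj]
      have h3 : e * m ^ j * ((2 - x) * m) = e * (2 * (m ^ j * m)) - e * ((m ^ j * x) * m) := by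
        noncomm_ring
      rw [h3, ha]
      noncomm_ring
    · have h1 : m ^ j * m * y = (m ^ j * x) * m := by rw [mul_assoc, ← I1, mul_assoc]
      rw [h1, ha]
      noncomm_ring
    · have hmm : m ^ j * m = m * m ^ j := ((Commute.refl m).pow_left j).eq
      rw [hmm, ← mul_assoc, I1, mul_assoc, hd, ← mul_assoc]
    · have hmm : m ^ j * m = m * m ^ j := ((Commute.refl m).pow_left j).eq
      rw [hmm, ← mul_assoc, I3]
      have h2 : m * ((2 - y) * e) * m ^ j = m * (2 * (e * m ^ j) - y * (e * m ^ j)) := by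
        noncomm_ring
      rw [h2, ← hpj]
      have h3 : m * (2 * (m ^ j * e) - y * (m ^ j * e)) =
          m * (2 * (m ^ j * e) - (y * m ^ j) * e) := by noncomm_ring
      rw [h3, hd]
      noncomm_ring

/-- If `u₁, u₂` are automorphisms of `V` unipotent of index 2 and `u = u₁ ∘ u₂`, then for every
`k`, both `u₁` and `u₂` map `ker (u - id)^k` into itself and `range (u - id)^k` into itself. -/
theorem stmt2 {F V : Type*} [Field F] (h2 : (2 : F) ≠ 0)
    [AddCommGroup V] [Module F V] [FiniteDimensional F V]
    (u₁ u₂ u : (Module.End F V)ˣ)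
    (h₁ : ((u₁ : Module.End F V) - 1) ^ 2 = 0)
    (h₂ : ((u₂ : Module.End F V) - 1) ^ 2 = 0)
    (hu : u = u₁ * u₂) :
    ∀ k : ℕ,
      Submodule.map (u₁ : Module.End F V) (LinearMap.ker (((u : Module.End F V) - 1) ^ k))
        ≤ LinearMap.ker (((u : Module.End F V) - 1) ^ k)
      ∧ Submodule.map (u₂ : Module.End F V) (LinearMap.ker (((u : Module.End F V) - 1) ^ k))
        ≤ LinearMap.ker (((u : Module.End F V) - 1) ^ k)
      ∧ Submodule.map (u₁ : Module.End F V) (LinearMap.range (((u : Module.End F V) - 1) ^ k))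
        ≤ LinearMap.range (((u : Module.End F V) - 1) ^ k)
      ∧ Submodule.map (u₂ : Module.End F V) (LinearMap.range (((u : Module.End F V) - 1) ^ k))
        ≤ LinearMap.range (((u : Module.End F V) - 1) ^ k) := by
  have hue : (u : Module.End F V) = (u₁ : Module.End F V) * (u₂ : Module.End F V) := by
    rw [hu]; rfl
  set e₁ := (u₁ : Module.End F V) with he₁
  set e₂ := (u₂ : Module.End F V) with he₂
  set m : Module.End F V := (u : Module.End F V) - 1 with hm
  have hm' : m = e₁ * e₂ - 1 := by rw [hm, hue]
  -- Identity 1 : e₁ * m = m * e₂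
  have I1 : e₁ * m = m * e₂ := by
    have h : e₁ * (e₁ * e₂ - 1) - (e₁ * e₂ - 1) * e₂
        = (e₁ - 1) ^ 2 * e₂ - e₁ * (e₂ - 1) ^ 2 := by noncomm_ring
    rw [h₁, h₂] at h
    simp only [zero_mul, mul_zero, sub_zero, sub_self] at h
    rw [hm']
    exact sub_eq_zero.mp h
  -- Identity 2 : m * e₁ = (e₁*e₂) * (2 - e₁) * m
  have I2 : m * e₁ = (e₁ * e₂) * (2 - e₁) * m := by
    have h : (e₁ * e₂ - 1) * e₁ - (e₁ * e₂) * (2 - e₁) * (e₁ * e₂ - 1)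
        = e₁ * e₂ * (e₁ - 1) ^ 2 * e₂ - e₁ * (e₂ - 1) ^ 2 := by noncomm_ring
    rw [h₁, h₂] at h
    simp only [zero_mul, mul_zero, sub_zero, sub_self] at h
    rw [hm']
    exact sub_eq_zero.mp h
  -- Identity 3 : e₂ * m = m * ((2 - e₂) * (e₁*e₂))
  have I3 : e₂ * m = m * ((2 - e₂) * (e₁ * e₂)) := by
    have h : e₂ * (e₁ * e₂ - 1) - (e₁ * e₂ - 1) * ((2 - e₂) * (e₁ * e₂))
        = e₁ * (e₂ - 1) ^ 2 * (e₁ * e₂) - (e₁ - 1) ^ 2 * e₂ := by noncomm_ring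
    rw [h₁, h₂] at h
    simp only [zero_mul, mul_zero, sub_zero, sub_self] at h
    rw [hm']
    exact sub_eq_zero.mp h
  have hce : Commute m (e₁ * e₂) := by
    rw [hm']
    exact (Commute.refl _).sub_left (Commute.one_left _)
  have hcomm : ∀ j : ℕ, m ^ j * (e₁ * e₂) = (e₁ * e₂) * m ^ j :=
    fun j => (hce.pow_left j).eq
  have main := stmt2_aux e₁ e₂ (e₁ * e₂) m hcomm I1 I2 I3
  intro k
  obtain ⟨⟨a, ha⟩, ⟨b, hb⟩, ⟨c, hc⟩, ⟨d, hd⟩⟩ := main k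
  refine ⟨?_, ?_, ?_, ?_⟩
  · rintro x ⟨y, hy, rfl⟩
    have hy' : (m ^ k) y = 0 := hy
    have : (m ^ k * e₁) y = (a * m ^ k) y := by rw [ha]
    simpa [LinearMap.mem_ker, Module.End.mul_apply, hy'] using this
  · rintro x ⟨y, hy, rfl⟩
    have hy' : (m ^ k) y = 0 := hy
    have : (m ^ k * e₂) y = (b * m ^ k) y := by rw [hb]
    simpa [LinearMap.mem_ker, Module.End.mul_apply, hy'] using this
  · rintro x ⟨y, ⟨z, rfl⟩, rfl⟩
    refine ⟨c z, ?_⟩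
    have : (e₁ * m ^ k) z = (m ^ k * c) z := by rw [hc]
    simpa [Module.End.mul_apply] using this.symm
  · rintro x ⟨y, ⟨z, rfl⟩, rfl⟩
    refine ⟨d z, ?_⟩
    have : (e₂ * m ^ k) z = (m ^ k * d) z := by rw [hd]
    simpa [Module.End.mul_apply] using this.symm
end

section
/- Let u be an automorphism of a vector space V over a field of characteristic not 2. Then for every natural number k, one has range (u - id)^(2k) = range (u + u⁻¹ - 2·id)^k and ker (u - id)^(2k) = ker (u + u⁻¹ - 2·id)^k. -/
/-- For an automorphism `u` of `V`, `range (u - id)^(2k) = range (u + u⁻¹ - 2·id)^k` and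
`ker (u - id)^(2k) = ker (u + u⁻¹ - 2·id)^k` for every `k`. -/
theorem stmt3 {F V : Type*} [Field F] (h2 : (2 : F) ≠ 0)
    [AddCommGroup V] [Module F V] [FiniteDimensional F V]
    (u : (Module.End F V)ˣ) (k : ℕ) :
    LinearMap.range (((u : Module.End F V) - 1) ^ (2 * k))
      = LinearMap.range (((u : Module.End F V) + (↑u⁻¹ : Module.End F V) - 2) ^ k)
    ∧ LinearMap.ker (((u : Module.End F V) - 1) ^ (2 * k))
      = LinearMap.ker (((u : Module.End F V) + (↑u⁻¹ : Module.End F V) - 2) ^ k) := by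
  set a : Module.End F V := (u : Module.End F V) - 1 with ha
  set v : Module.End F V := (↑u⁻¹ : Module.End F V) with hv
  have hvu : v * (u : Module.End F V) = 1 := u.inv_mul
  have huv : (u : Module.End F V) * v = 1 := u.mul_inv
  have key : (u : Module.End F V) + v - 2 = v * a ^ 2 := by
    have : a ^ 2 = (u : Module.End F V) * u - 2 * u + 1 := by
      rw [ha]; noncomm_ring
    rw [this]
    rw [mul_add, mul_sub, ← mul_assoc, hvu, one_mul, show (2 : Module.End F V) * u
      = (u : Module.End F V) * 2 by noncomm_ring, ← mul_assoc, hvu, one_mul, mul_one]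
    noncomm_ring
  have hcomm : Commute v (a ^ 2) := by
    have : Commute v (u : Module.End F V) := by
      unfold v; exact (Commute.refl (u : Module.End F V)).units_inv_left
    exact ((this.sub_right (Commute.one_right v)).pow_right 2)
  have hpow : ((u : Module.End F V) + v - 2) ^ k = v ^ k * a ^ (2 * k) := by
    rw [key, hcomm.mul_pow, ← pow_mul]
  have hpow' : ((u : Module.End F V) + v - 2) ^ k = a ^ (2 * k) * v ^ k := by
    rw [hpow, pow_mul]; exact (hcomm.pow_pow k k).eq
  have hvk : ∀ n : ℕ, Function.Bijective (v ^ n) := by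
    intro n
    have : v ^ n = ((u⁻¹ ^ n : (Module.End F V)ˣ) : Module.End F V) := by
      rw [hv, Units.val_pow_eq_pow_val]
    rw [this]
    exact (Module.End.isUnit_iff _).mp (u⁻¹ ^ n).isUnit
  constructor
  · rw [hpow']
    have : (a ^ (2 * k) * v ^ k : Module.End F V)
        = (a ^ (2 * k)).comp (v ^ k) := rfl
    rw [this, LinearMap.range_comp, LinearMap.range_eq_top.mpr (hvk k).2, Submodule.map_top]
  · rw [hpow]
    have : (v ^ k * a ^ (2 * k) : Module.End F V)
        = (v ^ k).comp (a ^ (2 * k)) := rfl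
    rw [this, LinearMap.ker_comp, LinearMap.ker_eq_bot.mpr (hvk k).1, Submodule.comap_bot]
end

section
/- Let A be an associative unital algebra over a field of characteristic not 2, and let a, a' be elements of A with a² = 0 and a'² = 0. Set u = (1 + a)(1 + a') and suppose (u - 1)² = 0. Then a·(u - u⁻¹) = -(u - u⁻¹)·a. -/
/-- In an associative unital algebra over a field of characteristic not 2, if `a² = 0`,
`a'² = 0`, `u = (1 + a)(1 + a')` and `(u - 1)² = 0`, then `a(u - u⁻¹) = -(u - u⁻¹)a`. -/
theorem stmt4 {F A : Type*} [Field F] (h2 : (2 : F) ≠ 0) [Ring A] [Algebra F A]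
    (a a' : A) (ha : a ^ 2 = 0) (ha' : a' ^ 2 = 0)
    (u uinv : A) (hu : u = (1 + a) * (1 + a'))
    (huinv₁ : u * uinv = 1) (huinv₂ : uinv * u = 1)
    (hunip : (u - 1) ^ 2 = 0) :
    a * (u - uinv) = -((u - uinv) * a) := by
  have hA : a * a = 0 := by rw [← pow_two]; exact ha
  have hA' : a' * a' = 0 := by rw [← pow_two]; exact ha'
  -- expansion of (u-1)^2
  have hE : a*a' + a'*a + a'*(a*a') + a*a'*a + (a*a')*(a*a') = 0 := by
    have e1 : (u - 1) ^ 2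
        = a*a + a*a' + (a*a)*a' + a'*a + a'*a' + a'*(a*a') + a*a'*a
          + a*(a'*a') + (a*a')*(a*a') := by
      rw [hu]; noncomm_ring
    rw [hunip, hA, hA'] at e1
    simp only [zero_mul, mul_zero, add_zero, zero_add] at e1
    exact e1.symm
  -- multiply hE on the left by a
  have hG : a*a'*a + (a*a')*(a*a') = 0 := by
    have e2 : a * (a*a' + a'*a + a'*(a*a') + a*a'*a + (a*a')*(a*a'))
        = (a*a)*a' + a*a'*a + (a*a')*(a*a') + (a*a)*(a'*a)
          + (a*a)*(a'*(a*a')) := by noncomm_ring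
    rw [hE, mul_zero, hA] at e2
    simp only [zero_mul, mul_zero, add_zero, zero_add] at e2
    exact e2.symm
  -- multiply hG on the right by a'
  have hT : (a*a')*(a*a') = 0 := by
    have e3 : (a*a'*a + (a*a')*(a*a')) * a'
        = (a*a')*(a*a') + (a*a')*(a*(a'*a')) := by noncomm_ring
    rw [hG, zero_mul, hA'] at e3
    simp only [zero_mul, mul_zero, add_zero, zero_add] at e3
    exact e3.symm
  have hG2 : a*a'*a = 0 := by
    have := hG
    rw [hT, add_zero] at this
    exact this
  -- multiply hE on the right by a'
  have hH : a'*(a*a') = 0 := by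
    have e4 : (a*a' + a'*a + a'*(a*a') + a*a'*a + (a*a')*(a*a')) * a'
        = a*(a'*a') + a'*(a*a') + a'*(a*(a'*a')) + (a*a')*(a*a')
          + ((a*a')*(a*a'))*a' := by noncomm_ring
    rw [hE, zero_mul, hA', hT] at e4
    simp only [zero_mul, mul_zero, add_zero, zero_add] at e4
    exact e4.symm
  have key : a*a' + a'*a = 0 := by
    have := hE
    rw [hH, hG2, hT] at this
    simpa using this
  have hra : a'*a = -(a*a') := eq_neg_of_add_eq_zero_right key
  -- identify uinv
  have hv : u * ((1 - a') * (1 - a)) = 1 := by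
    rw [hu]
    have e5 : (1 + a) * (1 + a') * ((1 - a') * (1 - a))
        = (1 + a) * ((1 + a') * (1 - a')) * (1 - a) := by noncomm_ring
    have e6 : (1 + a') * (1 - a') = 1 - a' * a' := by noncomm_ring
    have e7 : (1 + a) * (1 - a) = 1 - a * a := by noncomm_ring
    rw [e5, e6, hA', sub_zero, mul_one, e7, hA, sub_zero]
  have huv : uinv = (1 - a') * (1 - a) := by
    calc uinv = uinv * (u * ((1 - a') * (1 - a))) := by rw [hv, mul_one]
      _ = (uinv * u) * ((1 - a') * (1 - a)) := by rw [mul_assoc]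
      _ = (1 - a') * (1 - a) := by rw [huinv₂, one_mul]
  rw [hu, huv]
  have e8 : a * ((1 + a) * (1 + a') - (1 - a') * (1 - a))
      = 2*(a*a) + 2*(a*a') + (a*a)*a' - a*a'*a := by noncomm_ring
  have e9 : ((1 + a) * (1 + a') - (1 - a') * (1 - a)) * a
      = 2*(a*a) + 2*(a'*a) + a*a'*a - a'*(a*a) := by noncomm_ring
  rw [e8, e9, hA, hG2, hra]
  noncomm_ring
end

section
/- Let p be a monic polynomial of degree d ≥ 1 over a field F, and define R(p)(t) = t^d · p(t + t⁻¹). Then R(p) is a monic polynomial of degree 2d that is a palindromial, i.e., R(p) satisfies R(p)(0)⁻¹ · t^(2d) · R(p)(1/t) = R(p)(t) (equivalently, its coefficient sequence is symmetric and its constant coefficient is 1). -/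
open Polynomial LaurentPolynomial

lemma aux_rep {F : Type*} [Field F] (p : Polynomial F) :
    (LaurentPolynomial.T (p.natDegree : ℤ)
          * Polynomial.aeval (LaurentPolynomial.T 1 + LaurentPolynomial.T (-1)) p : F[T;T⁻¹])
      = Polynomial.toLaurent
        (∑ k ∈ Finset.range (p.natDegree + 1),
          Polynomial.C (p.coeff k) * X ^ (p.natDegree - k) * (X ^ 2 + 1) ^ k) := by
  set d := p.natDegree
  rw [Polynomial.aeval_eq_sum_range, Finset.mul_sum, map_sum]
  refine Finset.sum_congr rfl fun k hk => ?_
  have hk' : k ≤ d := Nat.lt_succ_iff.mp (Finset.mem_range.mp hk)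
  have h1 : (T 1 + T (-1) : F[T;T⁻¹]) = T (-1) * (T 2 + 1) := by
    have h2 : (T (-1) * T 2 : F[T;T⁻¹]) = T 1 := by
      rw [← T_add, show (-1+2 : ℤ) = 1 from by norm_num]
    rw [mul_add, mul_one, h2, add_comm]
  rw [h1, mul_pow, T_pow, map_mul, map_mul, Polynomial.toLaurent_C,
    Polynomial.toLaurent_X_pow, map_pow, map_add, map_pow, Polynomial.toLaurent_X, map_one,
    T_pow, mul_one, Algebra.smul_def, ← LaurentPolynomial.C_eq_algebraMap]
  rw [show ((d - k : ℕ) : ℤ) = (-(k : ℤ)) + d by push_cast [hk']; ring, T_add]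
  ring

/-- If `p` is a monic polynomial of degree `d ≥ 1` and `q` is the polynomial with
`q(t) = t^d · p(t + t⁻¹)` (an identity of Laurent polynomials), then `q` is monic of degree
`2d`, has constant coefficient `1`, and is a palindromial (its coefficient sequence is
symmetric, i.e. `q.reverse = q`). -/
theorem stmt6 {F : Type*} [Field F] (p q : Polynomial F)
    (hp : p.Monic) (hd : 1 ≤ p.natDegree)
    (hq : Polynomial.toLaurent q
      = LaurentPolynomial.T (p.natDegree : ℤ)
          * Polynomial.aeval (LaurentPolynomial.T 1 + LaurentPolynomial.T (-1)) p) :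
    q.Monic ∧ q.natDegree = 2 * p.natDegree ∧ q.coeff 0 = 1 ∧ q.reverse = q := by
  set d := p.natDegree with hdd
  have hrep : q = ∑ k ∈ Finset.range (d + 1),
      Polynomial.C (p.coeff k) * X ^ (d - k) * (X ^ 2 + 1) ^ k :=
    Polynomial.toLaurent_injective (by rw [hq, aux_rep])
  have hX21monic : ((X : F[X]) ^ 2 + 1).Monic := by
    apply Polynomial.monic_X_pow_add
    simp [Polynomial.degree_one]
  have h2deg : ((X : F[X]) ^ 2 + 1).natDegree = 2 := by
    simpa using Polynomial.natDegree_X_pow_add_C (n := 2) (r := (1 : F))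
  have hpowdeg : ∀ k : ℕ, (((X : F[X]) ^ 2 + 1) ^ k).natDegree = 2 * k := by
    intro k; rw [hX21monic.natDegree_pow, h2deg, mul_comm]
  -- degree bound on each summand
  have hdegle : ∀ k, k ≤ d →
      (Polynomial.C (p.coeff k) * X ^ (d - k) * (X ^ 2 + 1) ^ k).natDegree ≤ d + k := by
    intro k hk'
    calc (Polynomial.C (p.coeff k) * X ^ (d - k) * (X ^ 2 + 1) ^ k).natDegree
        ≤ (Polynomial.C (p.coeff k) * X ^ (d - k)).natDegree
            + ((X ^ 2 + 1 : F[X]) ^ k).natDegree := Polynomial.natDegree_mul_le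
      _ ≤ (d - k) + 2 * k := by
          rw [hpowdeg]
          gcongr
          exact (Polynomial.natDegree_C_mul_le _ _).trans (by simp)
      _ ≤ d + k := by omega
  -- coefficient at 2d
  have hc2d : q.coeff (2 * d) = 1 := by
    rw [hrep, Polynomial.finset_sum_coeff]
    rw [Finset.sum_eq_single d]
    · have : d - d = 0 := by omega
      rw [this, pow_zero, mul_one]
      have := (hX21monic.pow (n := d)).coeff_natDegree
      rw [hpowdeg] at this
      rw [Polynomial.coeff_C_mul, this, hp.coeff_natDegree, one_mul]
    · intro k hk hkd
      have hk' : k ≤ d := Nat.lt_succ_iff.mp (Finset.mem_range.mp hk)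
      apply Polynomial.coeff_eq_zero_of_natDegree_lt
      exact lt_of_le_of_lt (hdegle k hk') (by omega)
    · intro h; exact absurd (Finset.self_mem_range_succ d) h
  -- natDegree bound
  have hdegq : q.natDegree ≤ 2 * d := by
    rw [hrep]
    apply Polynomial.natDegree_sum_le_of_forall_le
    intro k hk
    exact (hdegle k (Nat.lt_succ_iff.mp (Finset.mem_range.mp hk))).trans (by
      have : k ≤ d := Nat.lt_succ_iff.mp (Finset.mem_range.mp hk); omega)
  have hdegq' : q.natDegree = 2 * d := by
    refine le_antisymm hdegq (Polynomial.le_natDegree_of_ne_zero ?_)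
    rw [hc2d]; exact one_ne_zero
  have hmonic : q.Monic := by
    unfold Polynomial.Monic Polynomial.leadingCoeff
    rw [hdegq', hc2d]
  -- constant coefficient
  have hc0 : q.coeff 0 = 1 := by
    rw [hrep, Polynomial.finset_sum_coeff]
    rw [Finset.sum_eq_single d]
    · have : d - d = 0 := by omega
      rw [this, pow_zero, mul_one, Polynomial.coeff_C_mul, hp.coeff_natDegree,
        one_mul, Polynomial.coeff_zero_eq_eval_zero]
      simp
    · intro k hk hkd
      have hk' : k ≤ d := Nat.lt_succ_iff.mp (Finset.mem_range.mp hk)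
      rw [Polynomial.coeff_zero_eq_eval_zero]
      simp only [Polynomial.eval_mul, Polynomial.eval_pow, Polynomial.eval_X]
      rw [zero_pow (by omega : d - k ≠ 0)]
      ring
    · intro h; exact absurd (Finset.self_mem_range_succ d) h
  refine ⟨hmonic, hdegq', hc0, ?_⟩
  -- palindromial
  apply Polynomial.toLaurent_injective
  rw [LaurentPolynomial.toLaurent_reverse, hdegq', hq]
  rw [map_mul, invert_T]
  have hinva : (invert (Polynomial.aeval (T 1 + T (-1)) p : F[T;T⁻¹]))
      = Polynomial.aeval (T 1 + T (-1)) p := by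
    have h := Polynomial.aeval_algHom_apply
      ((invert : F[T;T⁻¹] ≃ₐ[F] F[T;T⁻¹]) : F[T;T⁻¹] →ₐ[F] F[T;T⁻¹]) (T 1 + T (-1)) p
    simpa [add_comm] using h.symm
  rw [hinva]
  rw [mul_right_comm, ← T_add, show (-(d:ℤ) + ((2*d : ℕ) : ℤ)) = (d:ℤ) by push_cast; ring]
end

section
/- Let b be a nondegenerate bilinear form (symmetric or alternating) on a finite-dimensional vector space V over a field of characteristic not 2, and let u be an isometry of b. Then for every natural number k, the b-orthogonal complement of range (u - id)^k equals ker (u - id)^k. -/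
/-! The isometry `u` has adjoint `u⁻¹` with respect to `b`, so `(u - 1) ^ k` has adjoint
`(u⁻¹ - 1) ^ k`, and the `b`-orthogonal complement of the range of a map is the kernel of its
adjoint. Finally `u⁻¹ - 1 = -u⁻¹ (u - 1)` with commuting factors, so `(u⁻¹ - 1) ^ k` differs from
`(u - 1) ^ k` by the invertible factor `(-u⁻¹) ^ k` and has the same kernel. -/

namespace LinearMap

variable {R M M₁ M₂ : Type*}

section CommSemiring

variable [CommSemiring R] [AddCommMonoid M] [Module R M]
  [AddCommMonoid M₁] [Module R M₁] [AddCommMonoid M₂] [Module R M₂]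

theorem IsAdjointPair.pow {B : M →ₗ[R] M →ₗ[R] M₂} {f g : Module.End R M}
    (h : IsAdjointPair B B f g) (k : ℕ) : IsAdjointPair B B ⇑(f ^ k) ⇑(g ^ k) := by
  induction k with
  | zero => exact isAdjointPair_one
  | succ k ih => rw [pow_succ, pow_succ']; exact ih.mul h

theorem IsAdjointPair.forall_mem_range_eq_zero_iff {B : M →ₗ[R] M →ₗ[R] M₂}
    {B' : M₁ →ₗ[R] M₁ →ₗ[R] M₂} {f : M →ₗ[R] M₁} {g : M₁ →ₗ[R] M}
    (h : IsAdjointPair B B' f g) (hB' : B'.SeparatingLeft) (x : M) :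
    (∀ w ∈ range g, B x w = 0) ↔ x ∈ ker f := by
  simp only [mem_range, forall_exists_index, forall_apply_eq_imp_iff, ← h _, mem_ker]
  exact ⟨hB' (f x), fun hx y ↦ by rw [hx, map_zero, zero_apply]⟩

end CommSemiring

section CommRing

variable [CommRing R] [AddCommGroup M] [Module R M] [AddCommGroup M₂] [Module R M₂]

theorem isAdjointPair_symm_sub_one_pow {B : M →ₗ[R] M →ₗ[R] M₂} (e : M ≃ₗ[R] M)
    (he : ∀ x y, B (e x) (e y) = B x y) (k : ℕ) :
    IsAdjointPair B B ⇑(((e.symm : Module.End R M) - 1) ^ k) ⇑(((e : Module.End R M) - 1) ^ k) :=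
  have hsymm : IsAdjointPair B B e.symm e := fun x y ↦ by simpa using (he (e.symm x) y).symm
  IsAdjointPair.pow (hsymm.sub isAdjointPair_one) k

end CommRing

end LinearMap

namespace LinearEquiv

variable {R M : Type*} [Semiring R] [AddCommGroup M] [Module R M]

theorem ker_symm_sub_one_pow (e : M ≃ₗ[R] M) (k : ℕ) :
    LinearMap.ker (((e.symm : Module.End R M) - 1) ^ k) =
      LinearMap.ker (((e : Module.End R M) - 1) ^ k) := by
  set a : Module.End R M := e.toLinearMap
  set c : Module.End R M := e.symm.toLinearMap
  have hca : c * a = 1 := LinearMap.ext e.symm_apply_apply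
  have hac : a * c = 1 := LinearMap.ext e.apply_symm_apply
  have hfactor : c - 1 = -c * (a - 1) := by rw [neg_mul, mul_sub, hca, mul_one, neg_sub]
  have hcomm : Commute (-c) (a - 1) := .neg_left <| by
    simp only [Commute, SemiconjBy, mul_sub, sub_mul, hca, hac, mul_one, one_mul]
  have hunit : IsUnit ((-c) ^ k) :=
    ((Module.End.isUnit_iff c).mpr e.symm.bijective).neg.pow k
  rw [hfactor, hcomm.mul_pow]
  exact LinearMap.ker_comp_of_ker_eq_bot _
    (LinearMap.ker_eq_bot_of_injective ((Module.End.isUnit_iff _).mp hunit).injective)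

end LinearEquiv

theorem stmt8_general {F V : Type*} [Field F]
    [AddCommGroup V] [Module F V]
    (b : LinearMap.BilinForm F V) (hb : b.Nondegenerate)
    (u : Module.End F V) (hbij : Function.Bijective u)
    (hiso : ∀ x y, b (u x) (u y) = b x y) :
    ∀ (k : ℕ) (x : V),
      (∀ w ∈ LinearMap.range ((u - 1) ^ k), b x w = 0)
        ↔ x ∈ LinearMap.ker ((u - 1) ^ k) := by
  intro k x
  let e : V ≃ₗ[F] V := .ofBijective u hbij
  have horth := (LinearMap.isAdjointPair_symm_sub_one_pow e hiso k).forall_mem_range_eq_zero_iff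
    hb.1 x
  rwa [e.ker_symm_sub_one_pow] at horth

/-- For a nondegenerate symmetric or alternating bilinear form `b` and an isometry `u` of `b`,
the `b`-orthogonal complement of `range (u - id)^k` equals `ker (u - id)^k`. -/
theorem stmt8 {F V : Type*} [Field F] (h2 : (2 : F) ≠ 0)
    [AddCommGroup V] [Module F V] [FiniteDimensional F V]
    (b : LinearMap.BilinForm F V) (hb : b.Nondegenerate)
    (hsym : (∀ x y, b x y = b y x) ∨ (∀ x, b x x = 0))
    (u : Module.End F V) (hbij : Function.Bijective u)
    (hiso : ∀ x y, b (u x) (u y) = b x y) :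
    ∀ (k : ℕ) (x : V),
      (∀ w ∈ LinearMap.range ((u - 1) ^ k), b x w = 0)
        ↔ x ∈ LinearMap.ker ((u - 1) ^ k) :=
  stmt8_general b hb u hbij hiso
end

section
/- Let V be a finite-dimensional vector space over a field F of characteristic not 2, and let u be an automorphism of V such that both u₁ := id + a₁ and u₂ := id + a₂ satisfy a₁² = a₂² = 0 and u = u₁u₂, where additionally u - id is invertible. Then V = range a₁ ⊕ range a₂, and a₁ restricts to a bijection from range a₂ onto range a₁, while a₂ restricts to a bijection from range a₁ onto range a₂. -/
/-!
Expanding, `u - 1 = a₁ (1 + a₂) + a₂`, so surjectivity of `u - 1` gives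
`range a₁ ⊔ range a₂ = V`. Since `aᵢ² = 0`, `range aᵢ ≤ ker aᵢ`, so by rank–nullity each range has
dimension at most `dim V / 2`; hence the sum is direct, both ranges have dimension exactly
`dim V / 2`, and `ker aᵢ = range aᵢ`. A linear map restricted to a complement of its kernel is a
bijection onto its range, which gives the two bijections.
-/

open LinearMap Module

theorem Submodule.isCompl_iff_codisjoint {K V : Type*} [DivisionRing K] [AddCommGroup V]
    [Module K V] [FiniteDimensional K V] {s t : Submodule K V}
    (hdim : finrank K s + finrank K t ≤ finrank K V) : IsCompl s t ↔ Codisjoint s t := by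
  refine ⟨IsCompl.codisjoint, fun h ↦ ⟨?_, h⟩⟩
  have hsum := Submodule.finrank_sup_add_finrank_inf_eq s t
  rw [codisjoint_iff.1 h, finrank_top] at hsum
  exact disjoint_iff.2 (Submodule.finrank_eq_zero.1 (by omega))

theorem LinearMap.bijOn_range_of_isCompl_ker {R M N : Type*} [Ring R] [AddCommGroup M]
    [Module R M] [AddCommGroup N] [Module R N] (f : M →ₗ[R] N) {W : Submodule R M}
    (h : IsCompl (ker f) W) : Set.BijOn f W (range f) := by
  refine ⟨fun x _ ↦ mem_range_self f x, disjoint_ker_iff_injOn.1 h.disjoint.symm, ?_⟩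
  rintro _ ⟨x, rfl⟩
  have hx : x ∈ ker f ⊔ W := h.sup_eq_top ▸ Submodule.mem_top
  obtain ⟨k, hk, w, hw, rfl⟩ := Submodule.mem_sup.1 hx
  exact ⟨w, hw, by rw [map_add, mem_ker.1 hk, zero_add]⟩

theorem Module.End.range_le_ker_of_sq_eq_zero {R M : Type*} [Ring R] [AddCommGroup M]
    [Module R M] {a : Module.End R M} (ha : a ^ 2 = 0) : range a ≤ ker a :=
  range_le_ker_iff.2 (by rw [← Module.End.mul_eq_comp, ← sq, ha])

theorem Module.End.range_sup_range_eq_top_of_surjective {R M : Type*} [Ring R] [AddCommGroup M]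
    [Module R M] (a₁ a₂ : Module.End R M)
    (h : Function.Surjective ((1 + a₁) * (1 + a₂) - 1 : Module.End R M)) :
    range a₁ ⊔ range a₂ = ⊤ := by
  have hexp : (1 + a₁) * (1 + a₂) - 1 = a₁ * (1 + a₂) + a₂ := by noncomm_ring
  rw [eq_top_iff, ← range_eq_top.2 h, hexp, Module.End.mul_eq_comp]
  exact (range_add_le _ _).trans (sup_le_sup_right (range_comp_le_range _ _) _)

section RangeLeKer

variable {K V : Type*} [DivisionRing K] [AddCommGroup V] [Module K V] [FiniteDimensional K V]
  {a : Module.End K V}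

theorem Module.End.two_mul_finrank_range_le (h : range a ≤ ker a) :
    2 * finrank K (range a) ≤ finrank K V := by
  have := finrank_range_add_finrank_ker a
  have := Submodule.finrank_mono h
  omega

theorem Module.End.ker_eq_range_of_le_two_mul_finrank_range (h : range a ≤ ker a)
    (hdim : finrank K V ≤ 2 * finrank K (range a)) : ker a = range a := by
  have := finrank_range_add_finrank_ker a
  exact (Submodule.eq_of_le_of_finrank_le h (by omega)).symm

end RangeLeKer

theorem stmt9_general {F V : Type*} [Field F]
    [AddCommGroup V] [Module F V] [FiniteDimensional F V]
    (a₁ a₂ : Module.End F V) (ha₁ : a₁ ^ 2 = 0) (ha₂ : a₂ ^ 2 = 0)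
    (u : Module.End F V) (hu : u = (1 + a₁) * (1 + a₂))
    (hinv : Function.Bijective ((u - 1 : Module.End F V))) :
    IsCompl (LinearMap.range a₁) (LinearMap.range a₂)
    ∧ Set.BijOn ⇑a₁ (LinearMap.range a₂ : Set V) (LinearMap.range a₁ : Set V)
    ∧ Set.BijOn ⇑a₂ (LinearMap.range a₁ : Set V) (LinearMap.range a₂ : Set V) := by
  subst hu
  have hsq₁ := Module.End.range_le_ker_of_sq_eq_zero ha₁
  have hsq₂ := Module.End.range_le_ker_of_sq_eq_zero ha₂
  have hdim₁ := Module.End.two_mul_finrank_range_le hsq₁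
  have hdim₂ := Module.End.two_mul_finrank_range_le hsq₂
  have hcompl : IsCompl (range a₁) (range a₂) :=
    (Submodule.isCompl_iff_codisjoint (by omega)).2 <| codisjoint_iff.2 <|
      Module.End.range_sup_range_eq_top_of_surjective a₁ a₂ hinv.2
  have hsum := Submodule.finrank_add_eq_of_isCompl hcompl
  have hker₁ := Module.End.ker_eq_range_of_le_two_mul_finrank_range hsq₁ (by omega)
  have hker₂ := Module.End.ker_eq_range_of_le_two_mul_finrank_range hsq₂ (by omega)
  exact ⟨hcompl, a₁.bijOn_range_of_isCompl_ker (hker₁ ▸ hcompl),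
    a₂.bijOn_range_of_isCompl_ker (hker₂ ▸ hcompl.symm)⟩

/-- If `u = (1 + a₁)(1 + a₂)` with `a₁² = a₂² = 0` and `u - id` invertible, then
`V = range a₁ ⊕ range a₂`, `a₁` restricts to a bijection from `range a₂` onto `range a₁`,
and `a₂` restricts to a bijection from `range a₁` onto `range a₂`. -/
theorem stmt9 {F V : Type*} [Field F] (h2 : (2 : F) ≠ 0)
    [AddCommGroup V] [Module F V] [FiniteDimensional F V]
    (a₁ a₂ : Module.End F V) (ha₁ : a₁ ^ 2 = 0) (ha₂ : a₂ ^ 2 = 0)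
    (u : Module.End F V) (hu : u = (1 + a₁) * (1 + a₂))
    (hinv : Function.Bijective ((u - 1 : Module.End F V))) :
    IsCompl (LinearMap.range a₁) (LinearMap.range a₂)
    ∧ Set.BijOn ⇑a₁ (LinearMap.range a₂ : Set V) (LinearMap.range a₁ : Set V)
    ∧ Set.BijOn ⇑a₂ (LinearMap.range a₁ : Set V) (LinearMap.range a₂ : Set V) :=
  stmt9_general a₁ a₂ ha₁ ha₂ u hu hinv
end

section
/- Let V be a finite-dimensional vector space over a field F of characteristic not 2, and let u ∈ GL(V) be a product of two automorphisms each unipotent of index 2. Then h(u) : (x, φ) ↦ (u(x), φ ∘ u⁻¹) on V × V* is a product of two isometries of H^ε that are unipotent of index 2, for each ε ∈ {1, -1}. -/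
section Aux

variable {F V : Type*} [Field F] [AddCommGroup V] [Module F V]

/-- The extension of an automorphism to `V × V*`. -/
noncomputable def extMap (v : V ≃ₗ[F] V) : Module.End F (V × Module.Dual F V) :=
  LinearMap.prodMap v.toLinearMap v.symm.toLinearMap.dualMap

lemma extMap_apply (v : V ≃ₗ[F] V) (x : V) (φ : Module.Dual F V) :
    extMap v (x, φ) = (v x, φ ∘ₗ v.symm.toLinearMap) := rfl

lemma symm_unip (v : V ≃ₗ[F] V) (hv : (v.toLinearMap - 1) ^ 2 = 0) :
    (v.symm.toLinearMap - 1) ^ 2 = 0 := by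
  have hsv : v.symm.toLinearMap * v.toLinearMap = 1 := by
    ext x; simp [Module.End.mul_apply]
  have hmul : v.toLinearMap * (2 - v.toLinearMap) = 1 := by
    have hexp : v.toLinearMap * (2 - v.toLinearMap)
        = -((v.toLinearMap - 1) ^ 2) + 1 := by noncomm_ring
    rw [hexp, hv, neg_zero, zero_add]
  have hs : v.symm.toLinearMap = 2 - v.toLinearMap := by
    calc v.symm.toLinearMap
        = v.symm.toLinearMap * (v.toLinearMap * (2 - v.toLinearMap)) := by
          rw [hmul, mul_one]
      _ = (v.symm.toLinearMap * v.toLinearMap) * (2 - v.toLinearMap) := by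
          rw [mul_assoc]
      _ = 2 - v.toLinearMap := by rw [hsv, one_mul]
  rw [hs]
  have : (2 - v.toLinearMap - 1) ^ 2 = (v.toLinearMap - 1) ^ 2 := by noncomm_ring
  rw [this, hv]

lemma extMap_unip (v : V ≃ₗ[F] V) (hv : (v.toLinearMap - 1) ^ 2 = 0) :
    (extMap v - 1) ^ 2 = 0 := by
  have hs := symm_unip v hv
  have hv' : ∀ x : V, v (v x) - v x - (v x - x) = 0 := by
    intro x
    have := congrArg (fun f : Module.End F V => f x) hv
    simpa [pow_two, Module.End.mul_apply, LinearMap.sub_apply] using this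
  have hs' : ∀ x : V, v.symm (v.symm x) - v.symm x - (v.symm x - x) = 0 := by
    intro x
    have := congrArg (fun f : Module.End F V => f x) hs
    simpa [pow_two, Module.End.mul_apply, LinearMap.sub_apply] using this
  rw [pow_two]
  apply LinearMap.ext
  rintro ⟨x, φ⟩
  rw [Module.End.mul_apply]
  apply Prod.ext
  · simpa [extMap, LinearMap.prodMap_apply] using hv' x
  · apply LinearMap.ext
    intro y
    have hφ := congrArg φ (hs' y)
    simp only [map_sub, map_zero] at hφ
    simp [extMap, LinearMap.prodMap_apply, LinearMap.dualMap_apply]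
    linear_combination hφ

lemma extMap_isometry (v : V ≃ₗ[F] V) (ε : F)
    (H : LinearMap.BilinForm F (V × Module.Dual F V))
    (hH : ∀ (x y : V) (φ ψ : Module.Dual F V), H (x, φ) (y, ψ) = φ y + ε * ψ x) :
    ∀ X Y, H (extMap v X) (extMap v Y) = H X Y := by
  rintro ⟨x, φ⟩ ⟨y, ψ⟩
  rw [extMap_apply, extMap_apply, hH, hH]
  simp

end Aux

/-- If `u ∈ GL(V)` is a product of two automorphisms unipotent of index 2, then its
extension `h(u) : (x, φ) ↦ (u x, φ ∘ u⁻¹)` on `V × V*` is a product of two isometries of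
`H^ε` that are unipotent of index 2, for each `ε ∈ {1, -1}`. -/
theorem stmt13 {F V : Type*} [Field F] (h2 : (2 : F) ≠ 0)
    [AddCommGroup V] [Module F V] [FiniteDimensional F V]
    (ε : F) (hε : ε = 1 ∨ ε = -1)
    (H : LinearMap.BilinForm F (V × Module.Dual F V))
    (hH : ∀ (x y : V) (φ ψ : Module.Dual F V), H (x, φ) (y, ψ) = φ y + ε * ψ x)
    (u : V ≃ₗ[F] V)
    (hu : ∃ u₁ u₂ : V ≃ₗ[F] V,
      (u₁.toLinearMap - 1) ^ 2 = 0 ∧ (u₂.toLinearMap - 1) ^ 2 = 0 ∧ u = u₁ * u₂) :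
    ∃ w₁ w₂ : Module.End F (V × Module.Dual F V),
      (w₁ - 1) ^ 2 = 0 ∧ (w₂ - 1) ^ 2 = 0
      ∧ (∀ X Y, H (w₁ X) (w₁ Y) = H X Y)
      ∧ (∀ X Y, H (w₂ X) (w₂ Y) = H X Y)
      ∧ ∀ (x : V) (φ : Module.Dual F V),
          (w₁ * w₂) (x, φ) = (u x, φ ∘ₗ u.symm.toLinearMap) := by
  obtain ⟨u₁, u₂, h1, h2', rfl⟩ := hu
  refine ⟨extMap u₁, extMap u₂, extMap_unip u₁ h1, extMap_unip u₂ h2',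
    extMap_isometry u₁ ε H hH, extMap_isometry u₂ ε H hH, ?_⟩
  intro x φ
  rw [Module.End.mul_apply, extMap_apply, extMap_apply]
  apply Prod.ext
  · rfl
  · apply LinearMap.ext
    intro y
    simp [Module.End.mul_apply]
    rfl
end

section
/- Let V be a finite-dimensional vector space over a field F of characteristic not 2, and let b, c be bilinear forms on V with b nondegenerate. On V × V* define v_c(x, φ) = (0, c(-, x)) and w_b(x, φ) = (L_b⁻¹(φ), 0), where L_b : x ↦ b(-, x) is the isomorphism V → V* induced by b. Then v_c² = 0 and w_b² = 0, and the boxed product b ⊠ c := (id + v_c)(id + w_b) is an automorphism of V × V*. Moreover, (b ⊠ c) - id is invertible if and only if c is nondegenerate. -/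
/-- For bilinear forms `b, c` on `V` with `b` nondegenerate (with inverse isomorphism
`e = L_b : V ≃ V*`), the maps `v_c(x,φ) = (0, c(-,x))` and `w_b(x,φ) = (L_b⁻¹ φ, 0)` are
square-zero, the boxed product `b ⊠ c = (id + v_c)(id + w_b)` is an automorphism of
`V × V*`, and `(b ⊠ c) - id` is invertible iff `c` is nondegenerate. -/
theorem stmt14 {F V : Type*} [Field F] (h2 : (2 : F) ≠ 0)
    [AddCommGroup V] [Module F V] [FiniteDimensional F V]
    (b c : LinearMap.BilinForm F V) (hb : b.Nondegenerate)
    (e : V ≃ₗ[F] Module.Dual F V) (he : ∀ x, e x = b.flip x)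
    (vc wb : Module.End F (V × Module.Dual F V))
    (hvc : ∀ (x : V) (φ : Module.Dual F V), vc (x, φ) = ((0 : V), c.flip x))
    (hwb : ∀ (x : V) (φ : Module.Dual F V), wb (x, φ) = (e.symm φ, (0 : Module.Dual F V))) :
    vc ^ 2 = 0 ∧ wb ^ 2 = 0
    ∧ Function.Bijective (((1 + vc) * (1 + wb) : Module.End F (V × Module.Dual F V)))
    ∧ (Function.Bijective (((1 + vc) * (1 + wb) - 1 : Module.End F (V × Module.Dual F V)))
        ↔ c.Nondegenerate) := by
  have hv2 : vc ^ 2 = 0 := by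
    rw [pow_two]
    exact LinearMap.ext fun p => by
      rw [Module.End.mul_apply, show p = (p.1, p.2) from rfl, hvc, hvc]
      simp
  have hw2 : wb ^ 2 = 0 := by
    rw [pow_two]
    exact LinearMap.ext fun p => by
      rw [Module.End.mul_apply, show p = (p.1, p.2) from rfl, hwb, hwb]
      simp
  have hvv : ∀ p, vc (vc p) = 0 := by
    intro p
    have := DFunLike.congr_fun hv2 p
    rwa [pow_two, Module.End.mul_apply, LinearMap.zero_apply] at this
  have hww : ∀ p, wb (wb p) = 0 := by
    intro p
    have := DFunLike.congr_fun hw2 p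
    rwa [pow_two, Module.End.mul_apply, LinearMap.zero_apply] at this
  have huv : IsUnit (1 + vc) := by
    have h1 : (1 + vc) * (1 - vc) = 1 := LinearMap.ext fun p => by
      simp [Module.End.mul_apply, map_sub, hvv]
    have h2 : (1 - vc) * (1 + vc) = 1 := LinearMap.ext fun p => by
      simp [Module.End.mul_apply, map_add, hvv]
    exact ⟨⟨1 + vc, 1 - vc, h1, h2⟩, rfl⟩
  have huw : IsUnit (1 + wb) := by
    have h1 : (1 + wb) * (1 - wb) = 1 := LinearMap.ext fun p => by
      simp [Module.End.mul_apply, map_sub, hww]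
    have h2 : (1 - wb) * (1 + wb) = 1 := LinearMap.ext fun p => by
      simp [Module.End.mul_apply, map_add, hww]
    exact ⟨⟨1 + wb, 1 - wb, h1, h2⟩, rfl⟩
  have hbij : Function.Bijective ((1 + vc) * (1 + wb) :
      Module.End F (V × Module.Dual F V)) :=
    (Module.End.isUnit_iff _).mp (huv.mul huw)
  refine ⟨hv2, hw2, hbij, ?_⟩
  have hD : ((1 + vc) * (1 + wb) - 1 : Module.End F (V × Module.Dual F V))
      = vc + wb + vc * wb := by noncomm_ring
  have hDapp : ∀ (x : V) (φ : Module.Dual F V),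
      ((1 + vc) * (1 + wb) - 1 : Module.End F (V × Module.Dual F V)) (x, φ)
        = (e.symm φ, c.flip x + c.flip (e.symm φ)) := by
    intro x φ
    rw [hD]
    simp only [LinearMap.add_apply, Module.End.mul_apply, hvc, hwb]
    simp [Prod.ext_iff]
  constructor
  · intro hDbij
    have hinj : Function.Injective c.flip := by
      intro x y hxy
      have h1 := hDapp x 0
      have h2 := hDapp y 0
      rw [map_zero] at h1 h2
      have heq : ((1 + vc) * (1 + wb) - 1 : Module.End F (V × Module.Dual F V)) (x, 0)
          = ((1 + vc) * (1 + wb) - 1 : Module.End F (V × Module.Dual F V)) (y, 0) := by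
        rw [h1, h2, hxy]
      exact (Prod.ext_iff.mp (hDbij.1 heq)).1
    have : c.flip.Nondegenerate := by
      rw [LinearMap.BilinForm.nondegenerate_iff_ker_eq_bot, LinearMap.ker_eq_bot]
      exact hinj
    exact LinearMap.BilinForm.nonDegenerateFlip_iff.mp this
  · intro hc
    have hcf : c.flip.Nondegenerate := hc.flip
    have hinj : Function.Injective c.flip := by
      rw [← LinearMap.ker_eq_bot,
        ← LinearMap.BilinForm.nondegenerate_iff_ker_eq_bot]
      exact hcf
    have hsurj : Function.Surjective c.flip :=
      (LinearMap.injective_iff_surjective_of_finrank_eq_finrank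
        Subspace.dual_finrank_eq.symm).mp hinj
    constructor
    · intro p q hpq
      rw [show p = (p.1, p.2) from rfl, show q = (q.1, q.2) from rfl,
        hDapp, hDapp] at hpq
      have h1 := congrArg Prod.fst hpq
      have h2 := congrArg Prod.snd hpq
      simp only at h1 h2
      have hφ : p.2 = q.2 := e.symm.injective h1
      rw [hφ] at h2
      have hx : p.1 = q.1 := hinj (add_right_cancel h2)
      exact Prod.ext hx hφ
    · rintro ⟨u, ψ⟩
      obtain ⟨x, hx⟩ := hsurj (ψ - c.flip u)
      refine ⟨(x, e u), ?_⟩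
      rw [hDapp]
      simp [hx]
end

section
/- Let F be a field of characteristic not 2, and let V be a finite-dimensional vector space of dimension 2 over F with a nondegenerate alternating form b, so that Sp(b) = SL(V). Then -id_V is the product of three elements of SL(V), each unipotent of index 2. -/
/-- If `dim V = 2` with a nondegenerate alternating form `b` (so `Sp(b) = SL(V)`), then
`-id` is the product of three elements of `SL(V)`, each unipotent of index 2. -/
theorem stmt19 {F V : Type*} [Field F] (h2 : (2 : F) ≠ 0)
    [AddCommGroup V] [Module F V] [FiniteDimensional F V]
    (hdim : Module.finrank F V = 2)
    (b : LinearMap.BilinForm F V) (hb : b.Nondegenerate) (halt : ∀ x, b x x = 0) :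
    ∃ w₁ w₂ w₃ : Module.End F V,
      LinearMap.det w₁ = 1 ∧ LinearMap.det w₂ = 1 ∧ LinearMap.det w₃ = 1
      ∧ (w₁ - 1) ^ 2 = 0 ∧ (w₂ - 1) ^ 2 = 0 ∧ (w₃ - 1) ^ 2 = 0
      ∧ (-1 : Module.End F V) = w₁ * w₂ * w₃ := by
  classical
  let B := Module.finBasisOfFinrankEq F V hdim
  let e : Module.End F V ≃ₐ[F] Matrix (Fin 2) (Fin 2) F := LinearMap.toMatrixAlgEquiv B
  let M₁ : Matrix (Fin 2) (Fin 2) F := !![-1, 1; -4, 3]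
  let M₂ : Matrix (Fin 2) (Fin 2) F := !![1, 1; 0, 1]
  let M₃ : Matrix (Fin 2) (Fin 2) F := !![1, 0; -4, 1]
  refine ⟨e.symm M₁, e.symm M₂, e.symm M₃, ?_, ?_, ?_, ?_, ?_, ?_, ?_⟩
  · rw [show e.symm M₁ = Matrix.toLin B B M₁ from rfl, LinearMap.det_toLin]
    simp [M₁, Matrix.det_fin_two]; ring
  · rw [show e.symm M₂ = Matrix.toLin B B M₂ from rfl, LinearMap.det_toLin]
    simp [M₂, Matrix.det_fin_two]
  · rw [show e.symm M₃ = Matrix.toLin B B M₃ from rfl, LinearMap.det_toLin]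
    simp [M₃, Matrix.det_fin_two]
  · have : (M₁ - 1) ^ 2 = 0 := by
      ext i j; fin_cases i <;> fin_cases j <;>
        simp [M₁, pow_two, Matrix.mul_apply, Fin.sum_univ_two, Matrix.one_apply] <;> ring
    calc (e.symm M₁ - 1) ^ 2 = e.symm ((M₁ - 1) ^ 2) := by simp
    _ = 0 := by rw [this]; simp
  · have : (M₂ - 1) ^ 2 = 0 := by
      ext i j; fin_cases i <;> fin_cases j <;>
        simp [M₂, pow_two, Matrix.mul_apply, Fin.sum_univ_two, Matrix.one_apply]
    calc (e.symm M₂ - 1) ^ 2 = e.symm ((M₂ - 1) ^ 2) := by simp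
    _ = 0 := by rw [this]; simp
  · have : (M₃ - 1) ^ 2 = 0 := by
      ext i j; fin_cases i <;> fin_cases j <;>
        simp [M₃, pow_two, Matrix.mul_apply, Fin.sum_univ_two, Matrix.one_apply]
    calc (e.symm M₃ - 1) ^ 2 = e.symm ((M₃ - 1) ^ 2) := by simp
    _ = 0 := by rw [this]; simp
  · have : (-1 : Matrix (Fin 2) (Fin 2) F) = M₁ * M₂ * M₃ := by
      ext i j; fin_cases i <;> fin_cases j <;>
        simp [M₁, M₂, M₃, Matrix.mul_apply, Fin.sum_univ_two, Matrix.one_apply] <;> ring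
    calc (-1 : Module.End F V) = e.symm (-1) := by simp
    _ = e.symm (M₁ * M₂ * M₃) := by rw [← this]
    _ = _ := by simp
end
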